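/- Let P be a transition kernel of a transient, irreducible, locally finite random walk on a countable set S, and let φ(x) = log P(x₀, x₁) on the path space X⁺. Given a positive P-harmonic function h : S → ℝ⁺ (h(a) = Σ_b P(a,b)h(b)), define μ on cylinders by μ([a₁,…,aₙ]) = P(a₁,a₂)⋯P(a_{n−1},aₙ) h(aₙ). Then μ extends to a Radon measure on X⁺ satisfying L_φ* μ = μ, and the map h ↦ μ is a linear injection from positive P-harmonic functions to 1-conformal measures. -/

import Mathlib

open MeasureTheory ENNReal
open scoped Classical

variable {S : Type*}

/-- The one-sided topological Markov shift. -/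
abbrev MShift (Adj : S → S → Prop) : Type _ :=
  {x : ℕ → S // ∀ i, Adj (x i) (x (i + 1))}

/-- The left shift. -/
def shiftMap (Adj : S → S → Prop) (x : MShift Adj) : MShift Adj :=
  ⟨fun i => x.1 (i + 1), fun i => x.2 (i + 1)⟩

/-- The Ruelle operator on non-negative functions. -/
noncomputable def Ruelle (Adj : S → S → Prop) (φ : MShift Adj → ℝ)
    (f : MShift Adj → ℝ≥0∞) (x : MShift Adj) : ℝ≥0∞ :=
  ∑' y : {y : MShift Adj // shiftMap Adj y = x}, ENNReal.ofReal (Real.exp (φ y.1)) * f y.1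

/-- `n`-step transition probabilities. -/
noncomputable def Ppow (P : S → S → ℝ) : ℕ → S → S → ℝ
  | 0 => fun a b => if a = b then 1 else 0
  | n + 1 => fun a b => ∑' c, P a c * Ppow P n c b

/-- Transitivity of the underlying graph. -/
def TransitiveShift (Adj : S → S → Prop) : Prop :=
  ∀ a b : S, ∃ (n : ℕ) (x : MShift Adj), x.1 0 = a ∧ ((shiftMap Adj)^[n] x).1 0 = b

/-! Because `h` is harmonic, the weight `P(w₀,w₁)⋯P(wₙ₋₁,wₙ) h(wₙ)` of a cylinder is the sum of
the weights of its subcylinders, so the weights are finitely additive. Local finiteness makes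
cylinders compact and open: a countable cover of a cylinder by cylinders has a finite subcover,
which upgrades finite to countable additivity, and Carathéodory's construction then gives a
measure taking the prescribed values on cylinders. Prepending a letter `b` to a path multiplies
cylinder measures by `P(b, x₀)`; since the Ruelle operator for `φ = log P(x₀, x₁)` sums over
exactly these prepended paths, it preserves integrals. Linearity and injectivity of `h ↦ μ_h` are
checked on cylinders, which generate the σ-algebra, and `μ_h [a] = h(a)`. -/

open scoped NNReal

namespace MShift

variable {Adj : S → S → Prop}

/-- The cylinder `[w₀, …, wₙ]`: only the first `n + 1` letters of `w` matter. -/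
def cylinder (n : ℕ) (w : ℕ → S) : Set (MShift Adj) := {x | Set.EqOn x.1 w (Set.Iic n)}

theorem cylinder_eq_biInter (n : ℕ) (w : ℕ → S) :
    cylinder (Adj := Adj) n w = ⋂ i ∈ Set.Iic n, (fun x : MShift Adj => x.1 i) ⁻¹' {w i} := by
  ext x
  simp [cylinder, Set.EqOn]

theorem cylinder_subset_cylinder {m n : ℕ} {v w : ℕ → S} (hmn : m ≤ n)
    (hvw : Set.EqOn v w (Set.Iic m)) : cylinder (Adj := Adj) n v ⊆ cylinder m w :=
  fun _ hx => (hx.mono (Set.Iic_subset_Iic.mpr hmn)).trans hvw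

theorem mem_cylinder_zero {a : S} {x : MShift Adj} :
    x ∈ cylinder 0 (fun _ => a) ↔ x.1 0 = a := by
  simp [cylinder, Set.EqOn]

theorem iUnion_cylinder_zero : ⋃ a : S, cylinder (Adj := Adj) 0 (fun _ => a) = Set.univ :=
  Set.eq_univ_of_forall fun x => Set.mem_iUnion.mpr ⟨x.1 0, mem_cylinder_zero.mpr rfl⟩

theorem pairwise_disjoint_cylinder_zero :
    Pairwise (Function.onFun Disjoint fun a : S => cylinder (Adj := Adj) 0 (fun _ => a)) :=
  fun _ _ hab => Set.disjoint_left.mpr fun _ ha hb =>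
    hab ((mem_cylinder_zero.mp ha).symm.trans (mem_cylinder_zero.mp hb))

theorem setOf_forall_fin_eq_cylinder (n : ℕ) (w : Fin (n + 1) → S) :
    {x : MShift Adj | ∀ i : Fin (n + 1), x.1 i = w i} = cylinder n fun i => w (Fin.ofNat _ i) := by
  ext x
  refine ⟨fun hx i hi => ?_, fun hx i => ?_⟩
  · have := hx (Fin.ofNat _ i)
    rwa [Fin.val_ofNat, Nat.mod_eq_of_lt (Nat.lt_succ_of_le hi)] at this
  · simpa using hx (Set.mem_Iic.mpr (Nat.le_of_lt_succ i.2))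

theorem cylinder_nonempty (hsucc : ∀ a, ∃ b, Adj a b) {n : ℕ} {w : ℕ → S}
    (hw : ∀ i < n, Adj (w i) (w (i + 1))) : (cylinder (Adj := Adj) n w).Nonempty := by
  choose next hnext using hsucc
  let f : ℕ → S := fun i => if i < n then w i else next^[i - n] (w n)
  have hf_le : ∀ i ≤ n, f i = w i := fun i hi => by
    rcases hi.lt_or_eq with hi | rfl
    · simp [f, hi]
    · simp [f]
  have hf_ge : ∀ i, n ≤ i → f i = next^[i - n] (w n) := fun i hi => by simp [f, hi.not_gt]
  refine ⟨⟨f, fun i => ?_⟩, fun i hi => hf_le i hi⟩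
  rcases lt_or_ge i n with hi | hi
  · rw [hf_le i hi.le, hf_le (i + 1) hi]
    exact hw i hi
  · rw [hf_ge i hi, hf_ge (i + 1) (by omega), show i + 1 - n = (i - n) + 1 by omega,
      Function.iterate_succ_apply']
    exact hnext _

section Topology

variable [TopologicalSpace S]

theorem continuous_coord (i : ℕ) : Continuous fun x : MShift Adj => x.1 i :=
  (continuous_apply i).comp continuous_subtype_val

variable [DiscreteTopology S]

theorem isOpen_cylinder (n : ℕ) (w : ℕ → S) : IsOpen (cylinder (Adj := Adj) n w) := by
  rw [cylinder_eq_biInter]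
  exact (Set.finite_Iic n).isOpen_biInter fun i _ =>
    (isOpen_discrete _).preimage (continuous_coord i)

theorem isClosed_cylinder (n : ℕ) (w : ℕ → S) : IsClosed (cylinder (Adj := Adj) n w) := by
  rw [cylinder_eq_biInter]
  exact isClosed_biInter fun i _ => (isClosed_discrete _).preimage (continuous_coord i)

theorem isClosedEmbedding_val :
    Topology.IsClosedEmbedding (Subtype.val : MShift Adj → ℕ → S) := by
  refine IsClosed.isClosedEmbedding_subtypeVal (s := {x : ℕ → S | ∀ i, Adj (x i) (x (i + 1))}) ?_
  rw [Set.ofPred_forall]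
  exact isClosed_iInter fun i => IsClosed.preimage (f := fun x : ℕ → S => (x i, x (i + 1)))
    (by fun_prop) (isClosed_discrete {p : S × S | Adj p.1 p.2})

/-- On a cylinder the values at time `i + 1` are successors of those at time `i`, so every
coordinate ranges over a finite set. -/
theorem isCompact_cylinder (hfin : ∀ a, {b | Adj a b}.Finite) (n : ℕ) (w : ℕ → S) :
    IsCompact (cylinder (Adj := Adj) n w) := by
  let F : ℕ → Set S := fun i => (fun x : MShift Adj => x.1 i) '' cylinder n w
  have hF : ∀ i, (F i).Finite := by
    intro i
    induction i with
    | zero =>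
      refine (Set.finite_singleton (w 0)).subset ?_
      rintro _ ⟨x, hx, rfl⟩
      exact hx (Set.mem_Iic.mpr (Nat.zero_le n))
    | succ i ih =>
      refine (ih.biUnion fun a _ => hfin a).subset ?_
      rintro _ ⟨x, hx, rfl⟩
      exact Set.mem_biUnion ⟨x, hx, rfl⟩ (x.2 i)
  have hK : IsCompact (Subtype.val ⁻¹' Set.univ.pi F : Set (MShift Adj)) :=
    isClosedEmbedding_val.isCompact_preimage (isCompact_univ_pi fun i => (hF i).isCompact)
  exact hK.of_isClosed_subset (isClosed_cylinder n w) fun x hx i _ => ⟨x, hx, rfl⟩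

theorem measure_ne_top_of_isCompact [MeasurableSpace S] {μ : Measure (MShift Adj)}
    (hμ : ∀ a, μ (cylinder 0 fun _ => a) ≠ ⊤) {K : Set (MShift Adj)} (hK : IsCompact K) :
    μ K ≠ ⊤ := by
  obtain ⟨t, ht⟩ := hK.elim_finite_subcover _ (fun a => isOpen_cylinder 0 fun _ => a)
    (iUnion_cylinder_zero (Adj := Adj) ▸ Set.subset_univ K)
  exact ((measure_mono ht).trans (measure_biUnion_finset_le t _)).trans_lt
    (ENNReal.sum_lt_top.mpr fun a _ => (hμ a).lt_top) |>.ne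

end Topology

/-- Countably many representatives of the words of length `k + 1`. -/
def Word (S : Type*) (k : ℕ) : Type _ := {v : ℕ → S // ∀ i, v i = v (min i k)}

instance [Countable S] (k : ℕ) : Countable (Word S k) := by
  refine Function.Injective.countable
    (f := fun v : Word S k => fun j : Fin (k + 1) => v.1 j) ?_
  intro v w hvw
  refine Subtype.ext (funext fun i => ?_)
  rw [v.2 i, w.2 i]
  exact congrFun hvw ⟨min i k, Nat.lt_succ_of_le (min_le_right i k)⟩

def Word.trunc (k : ℕ) (w : ℕ → S) : Word S k := ⟨fun i => w (min i k), fun i => by simp⟩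

theorem Word.trunc_eqOn (k : ℕ) (w : ℕ → S) : Set.EqOn (Word.trunc k w).1 w (Set.Iic k) :=
  fun _ hi => congrArg w (min_eq_left hi)

theorem Word.eq_trunc_of_eqOn {k : ℕ} {v : Word S k} {w : ℕ → S}
    (h : Set.EqOn v.1 w (Set.Iic k)) : v = Word.trunc k w :=
  Subtype.ext <| funext fun i => (v.2 i).trans (h (Set.mem_Iic.mpr (min_le_right i k)))

theorem mem_cylinder_trunc (k : ℕ) (x : MShift Adj) : x ∈ cylinder k (Word.trunc k x.1).1 :=
  (Word.trunc_eqOn k x.1).symm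

theorem eqOn_trunc_iff {k n : ℕ} (hn : n ≤ k) {x : MShift Adj} {w : ℕ → S} :
    Set.EqOn (Word.trunc k x.1).1 w (Set.Iic n) ↔ x ∈ cylinder n w :=
  ⟨fun h => ((Word.trunc_eqOn k x.1).symm.mono (Set.Iic_subset_Iic.mpr hn)).trans h,
    fun h => ((Word.trunc_eqOn k x.1).mono (Set.Iic_subset_Iic.mpr hn)).trans h⟩

theorem isPiSystem_cylinders : IsPiSystem {A : Set (MShift Adj) | ∃ n w, A = cylinder n w} := by
  rintro _ ⟨m, v, rfl⟩ _ ⟨n, w, rfl⟩ ⟨x, hxv, hxw⟩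
  refine ⟨max m n, x.1, Set.Subset.antisymm (fun y ⟨hyv, hyw⟩ i hi => ?_) fun y hy =>
    ⟨cylinder_subset_cylinder (le_max_left m n) hxv hy,
      cylinder_subset_cylinder (le_max_right m n) hxw hy⟩⟩
  rcases le_max_iff.mp (Set.mem_Iic.mp hi) with him | hin
  · exact (hyv him).trans (hxv him).symm
  · exact (hyw hin).trans (hxw hin).symm

section Measurable

variable [MeasurableSpace S]

theorem measurable_coord (i : ℕ) : Measurable fun x : MShift Adj => x.1 i :=
  (measurable_pi_apply i).comp measurable_subtype_coe

variable [MeasurableSingletonClass S]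

theorem measurableSet_cylinder (n : ℕ) (w : ℕ → S) :
    MeasurableSet (cylinder (Adj := Adj) n w) := by
  rw [cylinder_eq_biInter]
  exact .biInter (Set.to_countable _) fun i _ => measurable_coord i (measurableSet_singleton _)

variable [Countable S]

theorem lintegral_eq_tsum_cylinder_zero (μ : Measure (MShift Adj)) (f : MShift Adj → ℝ≥0∞) :
    ∫⁻ x, f x ∂μ = ∑' a : S, ∫⁻ x in cylinder 0 (fun _ => a), f x ∂μ := by
  rw [← lintegral_iUnion (fun a => measurableSet_cylinder 0 _) pairwise_disjoint_cylinder_zero,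
    iUnion_cylinder_zero, Measure.restrict_univ]

theorem generateFrom_cylinders :
    MeasurableSpace.generateFrom {A : Set (MShift Adj) | ∃ n w, A = cylinder n w} =
      (inferInstance : MeasurableSpace (MShift Adj)) := by
  set m := MeasurableSpace.generateFrom {A : Set (MShift Adj) | ∃ n w, A = cylinder n w}
  refine le_antisymm (MeasurableSpace.generateFrom_le ?_) ?_
  · rintro _ ⟨n, w, rfl⟩
    exact measurableSet_cylinder n w
  have hval : Measurable[m] (Subtype.val : MShift Adj → ℕ → S) := by
    refine (@measurable_pi_iff _ _ _ m _ _).mpr fun i =>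
      @measurable_to_countable' _ _ _ _ m _ fun s => ?_
    have : (fun x : MShift Adj => x.1 i) ⁻¹' {s} =
        ⋃ (v : Word S i) (_ : v.1 i = s), cylinder i v.1 := by
      ext x
      simp only [Set.mem_preimage, Set.mem_singleton_iff, Set.mem_iUnion, exists_prop]
      exact ⟨fun hx => ⟨Word.trunc i x.1, (Word.trunc_eqOn i x.1 Set.self_mem_Iic).trans hx,
        mem_cylinder_trunc i x⟩, fun ⟨v, hv, hx⟩ => (hx Set.self_mem_Iic).trans hv⟩
    rw [this]
    exact .iUnion fun v => .iUnion fun _ =>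
      MeasurableSpace.measurableSet_generateFrom ⟨i, v.1, rfl⟩
  exact measurable_iff_comap_le.mp hval

theorem ext_of_cylinder {μ ν : Measure (MShift Adj)} (hμ : ∀ a, μ (cylinder 0 fun _ => a) ≠ ⊤)
    (h : ∀ n w, μ (cylinder n w) = ν (cylinder n w)) : μ = ν := by
  refine Measure.ext_of_generateFrom_of_cover_subset generateFrom_cylinders.symm
    isPiSystem_cylinders (T := Set.range fun a : S => cylinder 0 fun _ => a) ?_
    (Set.countable_range _) ?_ ?_ ?_
  · rintro _ ⟨a, rfl⟩
    exact ⟨0, fun _ => a, rfl⟩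
  · rw [Set.sUnion_range, iUnion_cylinder_zero]
  · rintro _ ⟨a, rfl⟩
    exact hμ a
  · rintro _ ⟨n, w, rfl⟩
    exact h n w

end Measurable

def cons (b : S) (x : MShift Adj) (hb : Adj b (x.1 0)) : MShift Adj :=
  ⟨fun | 0 => b | i + 1 => x.1 i, fun | 0 => hb | i + 1 => x.2 i⟩

theorem cons_mem_cylinder_zero_iff {b : S} {x : MShift Adj} {hb : Adj b (x.1 0)} {w : ℕ → S} :
    cons b x hb ∈ cylinder 0 w ↔ b = w 0 := by
  simp [cylinder, Set.EqOn, cons]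

theorem cons_mem_cylinder_succ_iff {b : S} {x : MShift Adj} {hb : Adj b (x.1 0)} {n : ℕ}
    {w : ℕ → S} :
    cons b x hb ∈ cylinder (n + 1) w ↔ b = w 0 ∧ x ∈ cylinder n fun i => w (i + 1) := by
  simp only [cylinder, Set.EqOn, Set.mem_Iic, Set.mem_ofPred_eq]
  refine ⟨fun h => ⟨h (Nat.zero_le _), fun i hi => h (Nat.succ_le_succ hi)⟩, ?_⟩
  rintro ⟨h0, h⟩ (_ | i) hi
  exacts [h0, h (Nat.le_of_succ_le_succ hi)]

def shiftPreimageEquiv (x : MShift Adj) : {b // Adj b (x.1 0)} ≃ {y // shiftMap Adj y = x} where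
  toFun b := ⟨cons b x b.2, rfl⟩
  invFun y := ⟨y.1.1 0, congrArg (·.1 0) y.2 ▸ y.1.2 0⟩
  left_inv _ := rfl
  right_inv y := Subtype.ext <| Subtype.ext <| funext fun
    | 0 => rfl
    | i + 1 => (congrArg (·.1 i) y.2).symm

theorem ruelle_eq_tsum (φ : MShift Adj → ℝ) (f : MShift Adj → ℝ≥0∞) (x : MShift Adj) :
    Ruelle Adj φ f x =
      ∑' b : {b // Adj b (x.1 0)},
        ENNReal.ofReal (Real.exp (φ (cons b x b.2))) * f (cons b x b.2) :=
  ((shiftPreimageEquiv x).tsum_eq fun y => ENNReal.ofReal (Real.exp (φ y.1)) * f y.1).symm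

noncomputable def consIfAdj (b : S) (x : MShift Adj) : MShift Adj :=
  if hb : Adj b (x.1 0) then cons b x hb else x

theorem consIfAdj_of_adj {b : S} {x : MShift Adj} (hb : Adj b (x.1 0)) :
    consIfAdj b x = cons b x hb :=
  dif_pos hb

theorem measurable_consIfAdj [MeasurableSpace S] [MeasurableSingletonClass S] [Countable S]
    (b : S) : Measurable (consIfAdj (Adj := Adj) b) := by
  unfold consIfAdj
  convert Measurable.dite (s := {x : MShift Adj | Adj b (x.1 0)})
    (f := fun p => cons b p.1 p.2) ?_ measurable_subtype_coe
    (measurable_coord 0 (Set.to_countable {a | Adj b a}).measurableSet)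
  · exact Iff.rfl
  refine Measurable.subtype_mk <| measurable_pi_lambda
    (fun p : {x : MShift Adj | Adj b (x.1 0)} => (cons b p.1 p.2).1) fun i => ?_
  cases i with
  | zero => exact measurable_const
  | succ i => exact (measurable_coord i).comp measurable_subtype_coe

theorem indicator_preimage_consIfAdj {b : S} {ρ : MShift Adj → ℝ≥0∞}
    (hρ : ∀ x, ¬Adj b (x.1 0) → ρ x = 0) {s t : Set (MShift Adj)}
    (hst : ∀ x hx, cons b x hx ∈ s ↔ x ∈ t) :
    (consIfAdj b ⁻¹' s).indicator ρ = t.indicator ρ := by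
  funext x
  by_cases hx : Adj b (x.1 0)
  · simp only [Set.indicator, Set.mem_preimage, consIfAdj_of_adj hx, hst x hx]
  · rw [Set.indicator_apply, Set.indicator_apply, hρ x hx, ite_self, ite_self]

end MShift

open MShift

section Harmonic

variable {P : S → S → ℝ} {g : S → ℝ≥0}

local notation "Ω" => MShift fun a b : S => 0 < P a b

variable (P) in
def IsHarmonic (g : S → ℝ≥0) : Prop :=
  ∀ a, ∑' b, ENNReal.ofReal (P a b) * g b = g a

theorem isHarmonic_toNNReal (hP : ∀ a b, 0 ≤ P a b) {h : S → ℝ} (h0 : ∀ a, 0 ≤ h a)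
    (hh : ∀ a, HasSum (fun b => P a b * h b) (h a)) : IsHarmonic P fun a => (h a).toNNReal := by
  intro a
  have := ENNReal.ofReal_tsum_of_nonneg (fun b => mul_nonneg (hP a b) (h0 b)) (hh a).summable
  rw [(hh a).tsum_eq] at this
  simp only [ENNReal.ofReal_mul (hP a _)] at this
  exact this.symm

theorem IsHarmonic.exists_pos (hg : IsHarmonic P g) {a : S} (ha : g a ≠ 0) : ∃ b, 0 < P a b := by
  by_contra! hP
  refine ha (ENNReal.coe_eq_zero.mp ?_)
  simp [← hg a, ENNReal.ofReal_eq_zero.mpr (hP _)]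

theorem IsHarmonic.add {g₁ g₂ : S → ℝ≥0} (h₁ : IsHarmonic P g₁) (h₂ : IsHarmonic P g₂) :
    IsHarmonic P (g₁ + g₂) := fun a => by
  simp only [Pi.add_apply, ENNReal.coe_add, mul_add, ENNReal.tsum_add, h₁ a, h₂ a]

theorem IsHarmonic.const_smul (hg : IsHarmonic P g) (c : ℝ≥0) :
    IsHarmonic P (c • g) := fun a => by
  simp only [Pi.smul_apply, smul_eq_mul, ENNReal.coe_mul, mul_left_comm _ (c : ℝ≥0∞),
    ENNReal.tsum_mul_left, hg a]

variable (P) in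
noncomputable def cylinderWeight (g : S → ℝ≥0) (n : ℕ) (w : ℕ → S) : ℝ≥0∞ :=
  (∏ i ∈ Finset.range n, ENNReal.ofReal (P (w i) (w (i + 1)))) * g (w n)

theorem cylinderWeight_congr {n : ℕ} {v w : ℕ → S} (h : Set.EqOn v w (Set.Iic n)) :
    cylinderWeight P g n v = cylinderWeight P g n w := by
  rw [cylinderWeight, cylinderWeight, h Set.self_mem_Iic]
  congr 1
  refine Finset.prod_congr rfl fun i hi => ?_
  have hi : i < n := Finset.mem_range.mp hi
  rw [h (Set.mem_Iic.mpr hi.le), h (Set.mem_Iic.mpr hi)]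

theorem cylinderWeight_succ (n : ℕ) (w : ℕ → S) :
    cylinderWeight P g (n + 1) w =
      ENNReal.ofReal (P (w 0) (w 1)) * cylinderWeight P g n fun i => w (i + 1) := by
  rw [cylinderWeight, cylinderWeight, Finset.prod_range_succ', mul_comm _ (ENNReal.ofReal _),
    mul_assoc]

theorem cylinderWeight_toNNReal (hP : ∀ a b, 0 ≤ P a b) (h : S → ℝ) (n : ℕ)
    (w : Fin (n + 1) → S) :
    cylinderWeight P (fun a => (h a).toNNReal) n (fun i => w (Fin.ofNat _ i)) =
      ENNReal.ofReal ((∏ i : Fin n, P (w i.castSucc) (w i.succ)) * h (w (Fin.last n))) := by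
  rw [ENNReal.ofReal_mul (Finset.prod_nonneg fun _ _ => hP _ _),
    ENNReal.ofReal_prod_of_nonneg fun _ _ => hP _ _, cylinderWeight,
    ← Fin.prod_univ_eq_prod_range]
  have h_castSucc : ∀ i : Fin n, Fin.ofNat (n + 1) i = i.castSucc := fun i => Fin.ext (by simp)
  have h_succ : ∀ i : Fin n, Fin.ofNat (n + 1) (i + 1) = i.succ := fun i => Fin.ext (by simp)
  have h_last : Fin.ofNat (n + 1) n = Fin.last n := Fin.ext (by simp)
  simp only [h_castSucc, h_succ, h_last]
  rfl

theorem cylinderWeight_eq_tsum_update (hg : IsHarmonic P g) (n : ℕ) (w : ℕ → S) :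
    cylinderWeight P g n w = ∑' b, cylinderWeight P g (n + 1) (Function.update w (n + 1) b) := by
  have hterm : ∀ b, cylinderWeight P g (n + 1) (Function.update w (n + 1) b) =
      (∏ i ∈ Finset.range n, ENNReal.ofReal (P (w i) (w (i + 1)))) *
        (ENNReal.ofReal (P (w n) b) * g b) := fun b => by
    have hu : Set.EqOn (Function.update w (n + 1) b) w (Set.Iic n) :=
      fun i hi => Function.update_of_ne (by simp at hi; omega) _ _
    rw [cylinderWeight, Finset.prod_range_succ, Function.update_self, hu Set.self_mem_Iic,
      mul_assoc]
    congr 1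
    refine Finset.prod_congr rfl fun i hi => ?_
    have hi : i < n := Finset.mem_range.mp hi
    rw [hu (Set.mem_Iic.mpr hi.le), hu (Set.mem_Iic.mpr hi)]
  simp_rw [hterm, ENNReal.tsum_mul_left, hg (w n)]
  rfl

/-- Harmonicity iterated `N - n` times; the sum runs over the subcylinders `[v₀, …, v_N]` of
`[w₀, …, wₙ]`. -/
theorem cylinderWeight_eq_tsum_word (hg : IsHarmonic P g) {n N : ℕ} (hnN : n ≤ N) (w : ℕ → S) :
    cylinderWeight P g n w =
      ∑' v : Word S N, if Set.EqOn v.1 w (Set.Iic n) then cylinderWeight P g N v.1 else 0 := by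
  obtain ⟨d, rfl⟩ := Nat.exists_eq_add_of_le hnN
  clear hnN
  induction d generalizing n w with
  | zero =>
    simp only [Nat.add_zero]
    rw [tsum_eq_single (Word.trunc n w) fun v hv => if_neg fun h => hv (Word.eq_trunc_of_eqOn h),
      if_pos (Word.trunc_eqOn n w), cylinderWeight_congr (Word.trunc_eqOn n w)]
  | succ d ih =>
    rw [cylinderWeight_eq_tsum_update hg, show n + (d + 1) = n + 1 + d by omega]
    rw [tsum_congr fun b => ih (n := n + 1) (w := Function.update w (n + 1) b), ENNReal.tsum_comm]
    refine tsum_congr fun v => ?_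
    rw [tsum_eq_single (v.1 (n + 1)) fun b hb => if_neg fun h => hb ?_]
    · refine if_congr ⟨fun h i hi => ?_, fun h i hi => ?_⟩ rfl rfl
      · have := h (Set.mem_Iic.mpr (Nat.le_succ_of_le hi))
        rwa [Function.update_of_ne (by simp at hi; omega)] at this
      · rcases (Set.mem_Iic.mp hi).lt_or_eq with hi | rfl
        · rw [Function.update_of_ne hi.ne, h (Set.mem_Iic.mpr (Nat.le_of_lt_succ hi))]
        · rw [Function.update_self]
    · simpa using (h Set.self_mem_Iic).symm

theorem cylinder_nonempty_of_cylinderWeight_ne_zero (hsucc : ∀ a, ∃ b, 0 < P a b) {n : ℕ}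
    {w : ℕ → S} (h : cylinderWeight P g n w ≠ 0) : (cylinder n w : Set Ω).Nonempty := by
  refine cylinder_nonempty hsucc fun i hi => ?_
  have := Finset.prod_ne_zero_iff.mp (left_ne_zero_of_mul h) i (Finset.mem_range.mpr hi)
  exact ENNReal.ofReal_pos.mp (pos_iff_ne_zero.mpr this)

/-- Refine all cylinders to a common length: a subcylinder of positive weight is nonempty, so it
lies in one of the covering cylinders. -/
theorem cylinderWeight_le_sum_of_subset (hg : IsHarmonic P g) (hsucc : ∀ a, ∃ b, 0 < P a b)
    {n : ℕ} {w : ℕ → S} {ι : Type*} (t : Finset ι) (m : ι → ℕ) (u : ι → ℕ → S)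
    (hcov : (cylinder n w : Set Ω) ⊆ ⋃ i ∈ t, cylinder (m i) (u i)) :
    cylinderWeight P g n w ≤ ∑ i ∈ t, cylinderWeight P g (m i) (u i) := by
  set N := n + t.sup m
  have hmN : ∀ i ∈ t, m i ≤ N := fun i hi => (Finset.le_sup hi).trans (Nat.le_add_left _ _)
  calc cylinderWeight P g n w
      = ∑' v : Word S N, if Set.EqOn v.1 w (Set.Iic n) then cylinderWeight P g N v.1 else 0 :=
        cylinderWeight_eq_tsum_word hg (Nat.le_add_right n _) w
    _ ≤ ∑' v : Word S N, ∑ i ∈ t,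
          if Set.EqOn v.1 (u i) (Set.Iic (m i)) then cylinderWeight P g N v.1 else 0 := by
        refine ENNReal.tsum_le_tsum fun v => ?_
        split_ifs with hvw
        · obtain h0 | h0 := eq_or_ne (cylinderWeight P g N v.1) 0
          · exact h0.le.trans zero_le
          obtain ⟨x, hx⟩ := cylinder_nonempty_of_cylinderWeight_ne_zero hsucc h0
          obtain ⟨i, hi, hxi⟩ := Set.mem_iUnion₂.mp
            (hcov (cylinder_subset_cylinder (Nat.le_add_right n _) hvw hx))
          refine le_trans (le_of_eq ?_) (Finset.single_le_sum (fun j _ => zero_le) hi)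
          rw [if_pos ((hx.symm.mono (Set.Iic_subset_Iic.mpr (hmN i hi))).trans hxi)]
        · exact zero_le
    _ = ∑ i ∈ t, cylinderWeight P g (m i) (u i) := by
        rw [Summable.tsum_finsetSum fun _ _ => ENNReal.summable]
        exact Finset.sum_congr rfl fun i hi => (cylinderWeight_eq_tsum_word hg (hmN i hi) _).symm

variable (P) in
noncomputable def coverWeight (g : S → ℝ≥0) (A : Set Ω) : ℝ≥0∞ :=
  if A = ∅ then 0 else ⨅ (n) (w) (_ : A ⊆ cylinder n w), cylinderWeight P g n w

theorem coverWeight_empty : coverWeight P g ∅ = 0 :=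
  if_pos rfl

variable (P) in
noncomputable def pathOuterMeasure (g : S → ℝ≥0) : OuterMeasure Ω :=
  OuterMeasure.ofFunction (coverWeight P g) coverWeight_empty

theorem pathOuterMeasure_le {A : Set Ω} {n : ℕ} {w : ℕ → S} (hA : A ⊆ cylinder n w) :
    pathOuterMeasure P g A ≤ cylinderWeight P g n w := by
  refine (OuterMeasure.ofFunction_le A).trans ?_
  rw [coverWeight]
  split_ifs
  exacts [zero_le, iInf_le_of_le n (iInf_le_of_le w (iInf_le _ hA))]

/-- Cylinders are compact and open, so a countable cover of one has a finite subcover. -/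
theorem cylinderWeight_le_pathOuterMeasure (hg : IsHarmonic P g) (hsucc : ∀ a, ∃ b, 0 < P a b)
    (hfin : ∀ a, {b | 0 < P a b}.Finite) (n : ℕ) (w : ℕ → S) :
    cylinderWeight P g n w ≤ pathOuterMeasure P g (cylinder n w) := by
  let : TopologicalSpace S := ⊥
  have : DiscreteTopology S := ⟨rfl⟩
  rw [pathOuterMeasure, OuterMeasure.ofFunction_apply]
  refine le_iInf₂ fun A hA => ENNReal.le_of_forall_pos_le_add fun ε hε hA_fin => ?_
  obtain ⟨δ, hδ, hδε⟩ := ENNReal.exists_pos_sum_of_countable' (ENNReal.coe_ne_zero.mpr hε.ne') ℕ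
  have happrox : ∀ i : {i // (A i).Nonempty}, ∃ p : ℕ × (ℕ → S),
      A i ⊆ cylinder p.1 p.2 ∧ cylinderWeight P g p.1 p.2 < coverWeight P g (A i) + δ i := by
    rintro ⟨i, hi⟩
    have hlt : coverWeight P g (A i) < coverWeight P g (A i) + δ i :=
      ENNReal.lt_add_right (ne_top_of_le_ne_top hA_fin.ne (ENNReal.le_tsum i)) (hδ i).ne'
    conv_lhs at hlt => rw [coverWeight, if_neg hi.ne_empty]
    simp only [iInf_lt_iff] at hlt
    obtain ⟨n, w, hA, hw⟩ := hlt
    exact ⟨(n, w), hA, hw⟩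
  choose p hpA hpw using happrox
  obtain ⟨t, ht⟩ := (isCompact_cylinder hfin n w).elim_finite_subcover
    (fun i => cylinder (p i).1 (p i).2) (fun i => isOpen_cylinder _ _) fun x hx => by
      obtain ⟨i, hi⟩ := Set.mem_iUnion.mp (hA hx)
      exact Set.mem_iUnion.mpr ⟨⟨i, x, hi⟩, hpA _ hi⟩
  calc cylinderWeight P g n w
      ≤ ∑ i ∈ t, cylinderWeight P g (p i).1 (p i).2 :=
        cylinderWeight_le_sum_of_subset hg hsucc t _ _ ht
    _ ≤ ∑ i ∈ t, (coverWeight P g (A i) + δ i) := Finset.sum_le_sum fun i _ => (hpw i).le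
    _ ≤ ∑' i : ℕ, (coverWeight P g (A i) + δ i) := (ENNReal.sum_le_tsum t).trans
        (ENNReal.tsum_comp_le_tsum_of_injective Subtype.val_injective _)
    _ ≤ ∑' i, coverWeight P g (A i) + ε := by
        rw [ENNReal.tsum_add]
        exact add_le_add le_rfl hδε.le

theorem pathOuterMeasure_cylinder (hg : IsHarmonic P g) (hsucc : ∀ a, ∃ b, 0 < P a b)
    (hfin : ∀ a, {b | 0 < P a b}.Finite) (n : ℕ) (w : ℕ → S) :
    pathOuterMeasure P g (cylinder n w) = cylinderWeight P g n w :=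
  le_antisymm (pathOuterMeasure_le subset_rfl)
    (cylinderWeight_le_pathOuterMeasure hg hsucc hfin n w)

theorem pathOuterMeasure_le_tsum_word [Countable S] (N : ℕ) (q : Word S N → Prop)
    [DecidablePred q] {A : Set Ω}
    (hA : ∀ x ∈ A, q (Word.trunc N x.1)) :
    pathOuterMeasure P g A ≤ ∑' v : Word S N, if q v then cylinderWeight P g N v.1 else 0 :=
  calc pathOuterMeasure P g A
      ≤ pathOuterMeasure P g (⋃ v : Word S N, if q v then cylinder N v.1 else ∅) :=
        measure_mono fun x hx => Set.mem_iUnion.mpr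
          ⟨Word.trunc N x.1, by rw [if_pos (hA x hx)]; exact mem_cylinder_trunc N x⟩
    _ ≤ ∑' v, pathOuterMeasure P g (if q v then cylinder N v.1 else ∅) := measure_iUnion_le _
    _ ≤ _ := ENNReal.tsum_le_tsum fun v => by
        split_ifs
        exacts [pathOuterMeasure_le subset_rfl, measure_empty.le]

/-- Refined to length `max n k`, every subcylinder of a cylinder `[w₀, …, wₙ]` containing `B` lies
either inside or outside `cylinder k u`. -/
theorem pathOuterMeasure_inter_add_diff_le [Countable S] (hg : IsHarmonic P g) (k : ℕ) (u : ℕ → S)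
    (B : Set Ω) :
    pathOuterMeasure P g (B ∩ cylinder k u) + pathOuterMeasure P g (B \ cylinder k u) ≤
      coverWeight P g B := by
  rw [coverWeight]
  split_ifs with hB
  · simp [hB]
  refine le_iInf₂ fun n w => le_iInf fun hBw => ?_
  set N := max n k
  calc _ ≤ (∑' v : Word S N, if Set.EqOn v.1 w (Set.Iic n) ∧ Set.EqOn v.1 u (Set.Iic k)
          then cylinderWeight P g N v.1 else 0) +
        ∑' v : Word S N, if Set.EqOn v.1 w (Set.Iic n) ∧ ¬Set.EqOn v.1 u (Set.Iic k)
          then cylinderWeight P g N v.1 else 0 := by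
        refine add_le_add (pathOuterMeasure_le_tsum_word N _ fun x hx => ⟨?_, ?_⟩)
          (pathOuterMeasure_le_tsum_word N _ fun x hx => ⟨?_, fun h => hx.2 ?_⟩)
        · exact (eqOn_trunc_iff (le_max_left n k)).mpr (hBw hx.1)
        · exact (eqOn_trunc_iff (le_max_right n k)).mpr hx.2
        · exact (eqOn_trunc_iff (le_max_left n k)).mpr (hBw hx.1)
        · exact (eqOn_trunc_iff (le_max_right n k)).mp h
    _ = ∑' v : Word S N, if Set.EqOn v.1 w (Set.Iic n) then cylinderWeight P g N v.1 else 0 := by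
        rw [← ENNReal.tsum_add]
        refine tsum_congr fun v => ?_
        by_cases hw : Set.EqOn v.1 w (Set.Iic n) <;> by_cases hu : Set.EqOn v.1 u (Set.Iic k) <;>
          simp [hw, hu]
    _ = cylinderWeight P g n w := (cylinderWeight_eq_tsum_word hg (le_max_left n k) w).symm

theorem isCaratheodory_cylinder [Countable S] (hg : IsHarmonic P g) (k : ℕ) (u : ℕ → S) :
    MeasurableSet[(pathOuterMeasure P g).caratheodory] (cylinder k u) := by
  have : OuterMeasure.restrict (cylinder k u) (pathOuterMeasure P g) +
      OuterMeasure.restrict (cylinder k u)ᶜ (pathOuterMeasure P g) ≤ pathOuterMeasure P g :=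
    OuterMeasure.le_ofFunction.mpr fun B => by
      simpa [OuterMeasure.restrict_apply, Set.sdiff_eq] using
        pathOuterMeasure_inter_add_diff_le hg k u B
  refine (OuterMeasure.isCaratheodory_iff_le _).mpr fun t => ?_
  simpa [OuterMeasure.restrict_apply, Set.sdiff_eq] using this t

theorem ruelle_log_eq_tsum (f : Ω → ℝ≥0∞) (x : Ω) :
    Ruelle (fun a b : S => 0 < P a b) (fun x => Real.log (P (x.1 0) (x.1 1))) f x =
      ∑' b, ENNReal.ofReal (P b (x.1 0)) * f (consIfAdj b x) := by
  rw [ruelle_eq_tsum, ← tsum_subtype_eq_of_support_subset (s := {b | 0 < P b (x.1 0)}) ?_]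
  · refine tsum_congr fun b => ?_
    rw [consIfAdj_of_adj b.2]
    exact congrArg (ENNReal.ofReal · * _) (Real.exp_log b.2)
  · intro b hb
    by_contra h
    exact hb (by simp only [ENNReal.ofReal_eq_zero.mpr (not_lt.mp h), zero_mul])

section Measure

variable [MeasurableSpace S] [MeasurableSingletonClass S] [Countable S]

theorem le_caratheodory_pathOuterMeasure (hg : IsHarmonic P g) :
    (inferInstance : MeasurableSpace Ω) ≤ (pathOuterMeasure P g).caratheodory := by
  rw [← generateFrom_cylinders]
  exact MeasurableSpace.generateFrom_le fun _ ⟨k, u, hA⟩ => hA ▸ isCaratheodory_cylinder hg k u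

variable (P) in
noncomputable def harmonicMeasure (g : S → ℝ≥0) : Measure Ω :=
  if hg : IsHarmonic P g then (pathOuterMeasure P g).toMeasure (le_caratheodory_pathOuterMeasure hg)
  else 0

theorem harmonicMeasure_cylinder (hg : IsHarmonic P g) (hsucc : ∀ a, ∃ b, 0 < P a b)
    (hfin : ∀ a, {b | 0 < P a b}.Finite) (n : ℕ) (w : ℕ → S) :
    harmonicMeasure P g (cylinder n w) = cylinderWeight P g n w := by
  rw [harmonicMeasure, dif_pos hg, toMeasure_apply _ _ (measurableSet_cylinder n w),
    pathOuterMeasure_cylinder hg hsucc hfin]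

theorem harmonicMeasure_cylinder_zero (hg : IsHarmonic P g) (hsucc : ∀ a, ∃ b, 0 < P a b)
    (hfin : ∀ a, {b | 0 < P a b}.Finite) (a : S) :
    harmonicMeasure P g (cylinder 0 fun _ => a) = g a := by
  rw [harmonicMeasure_cylinder hg hsucc hfin, cylinderWeight, Finset.prod_range_zero, one_mul]

theorem harmonicMeasure_add {g₁ g₂ : S → ℝ≥0} (hg₁ : IsHarmonic P g₁) (hg₂ : IsHarmonic P g₂)
    (hsucc : ∀ a, ∃ b, 0 < P a b) (hfin : ∀ a, {b | 0 < P a b}.Finite) :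
    harmonicMeasure P (g₁ + g₂) = harmonicMeasure P g₁ + harmonicMeasure P g₂ := by
  refine ext_of_cylinder (fun a => ?_) fun n w => ?_
  · rw [harmonicMeasure_cylinder_zero (hg₁.add hg₂) hsucc hfin]
    exact ENNReal.coe_ne_top
  · rw [Measure.add_apply, harmonicMeasure_cylinder (hg₁.add hg₂) hsucc hfin,
      harmonicMeasure_cylinder hg₁ hsucc hfin, harmonicMeasure_cylinder hg₂ hsucc hfin,
      cylinderWeight, cylinderWeight, cylinderWeight, Pi.add_apply, ENNReal.coe_add, mul_add]

theorem harmonicMeasure_const_smul (hg : IsHarmonic P g) (hsucc : ∀ a, ∃ b, 0 < P a b)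
    (hfin : ∀ a, {b | 0 < P a b}.Finite) (c : ℝ≥0) :
    harmonicMeasure P (c • g) = (c : ℝ≥0∞) • harmonicMeasure P g := by
  refine ext_of_cylinder (fun a => ?_) fun n w => ?_
  · rw [harmonicMeasure_cylinder_zero (hg.const_smul c) hsucc hfin]
    exact ENNReal.coe_ne_top
  · rw [Measure.smul_apply, harmonicMeasure_cylinder (hg.const_smul c) hsucc hfin,
      harmonicMeasure_cylinder hg hsucc hfin, cylinderWeight, cylinderWeight, Pi.smul_apply,
      smul_eq_mul, smul_eq_mul, ENNReal.coe_mul, mul_left_comm]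

theorem lintegral_ofReal_transition (hg : IsHarmonic P g) (hsucc : ∀ a, ∃ b, 0 < P a b)
    (hfin : ∀ a, {b | 0 < P a b}.Finite) (b : S) :
    ∫⁻ x, ENNReal.ofReal (P b (x.1 0)) ∂harmonicMeasure P g = g b := by
  rw [lintegral_eq_tsum_cylinder_zero, ← hg b]
  refine tsum_congr fun a => ?_
  rw [setLIntegral_congr_fun (g := fun _ => ENNReal.ofReal (P b a)) (measurableSet_cylinder 0 _)
    fun x hx => by rw [mem_cylinder_zero.mp hx], setLIntegral_const,
    harmonicMeasure_cylinder_zero hg hsucc hfin]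

/-- On cylinders this is `μ [b w₀ … wₙ] = P(b, w₀) μ [w₀ … wₙ]`, and `μ [b] = ∫ P(b, x₀) dμ`
by harmonicity. -/
theorem map_consIfAdj_withDensity (hg : IsHarmonic P g) (hsucc : ∀ a, ∃ b, 0 < P a b)
    (hfin : ∀ a, {b | 0 < P a b}.Finite) (b : S) :
    ((harmonicMeasure P g).withDensity fun x => ENNReal.ofReal (P b (x.1 0))).map
        (consIfAdj b) = (harmonicMeasure P g).restrict (cylinder 0 fun _ => b) := by
  have hρ : ∀ x : Ω, ¬0 < P b (x.1 0) → ENNReal.ofReal (P b (x.1 0)) = 0 :=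
    fun x hx => ENNReal.ofReal_eq_zero.mpr (not_lt.mp hx)
  refine (ext_of_cylinder (fun a => ?_) fun n w => ?_).symm
  · refine ne_top_of_le_ne_top ?_ (Measure.restrict_le_self _)
    rw [harmonicMeasure_cylinder_zero hg hsucc hfin]
    exact ENNReal.coe_ne_top
  have hC := measurableSet_cylinder (Adj := fun a b : S => 0 < P a b) n w
  rw [Measure.restrict_apply hC, Measure.map_apply (measurable_consIfAdj b) hC,
    withDensity_apply _ (measurable_consIfAdj b hC),
    ← lintegral_indicator (measurable_consIfAdj b hC)]
  by_cases hb : b = w 0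
  · rw [Set.inter_eq_left.mpr (cylinder_subset_cylinder (Nat.zero_le n) fun i hi => by
      rw [Set.mem_Iic.mp hi |> Nat.le_zero.mp, hb]), harmonicMeasure_cylinder hg hsucc hfin]
    cases n with
    | zero =>
      rw [indicator_preimage_consIfAdj hρ (t := Set.univ) fun x hx => by
        simp [cons_mem_cylinder_zero_iff, hb], Set.indicator_univ,
        lintegral_ofReal_transition hg hsucc hfin, cylinderWeight, Finset.prod_range_zero,
        one_mul, hb]
    | succ n =>
      rw [indicator_preimage_consIfAdj hρ (t := cylinder n fun i => w (i + 1)) fun x hx => by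
        simp [cons_mem_cylinder_succ_iff, hb], lintegral_indicator (measurableSet_cylinder _ _),
        setLIntegral_congr_fun (g := fun _ => ENNReal.ofReal (P b (w 1)))
          (measurableSet_cylinder _ _) fun x hx => by rw [hx (Set.mem_Iic.mpr (Nat.zero_le n))],
        setLIntegral_const, harmonicMeasure_cylinder hg hsucc hfin, cylinderWeight_succ, hb]
  · have hdisj : cylinder n w ∩ cylinder 0 (fun _ => b) = (∅ : Set Ω) :=
      Set.eq_empty_of_forall_notMem fun x ⟨hxw, hxb⟩ =>
        hb ((mem_cylinder_zero.mp hxb).symm.trans (hxw (Set.mem_Iic.mpr (Nat.zero_le n))))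
    rw [hdisj, measure_empty, indicator_preimage_consIfAdj hρ (s := cylinder n w) (t := ∅)
      fun x hx => iff_of_false (fun h => hb (h (Set.mem_Iic.mpr (Nat.zero_le n)))) id,
      Set.indicator_empty, lintegral_zero]

theorem lintegral_ruelle_harmonicMeasure (hg : IsHarmonic P g) (hsucc : ∀ a, ∃ b, 0 < P a b)
    (hfin : ∀ a, {b | 0 < P a b}.Finite) {f : Ω → ℝ≥0∞} (hf : Measurable f) :
    ∫⁻ x, Ruelle (fun a b : S => 0 < P a b) (fun x => Real.log (P (x.1 0) (x.1 1))) f x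
        ∂harmonicMeasure P g = ∫⁻ x, f x ∂harmonicMeasure P g := by
  set μ := harmonicMeasure P g
  have hρ : ∀ b, Measurable fun x : Ω => ENNReal.ofReal (P b (x.1 0)) :=
    fun b => (measurable_of_countable fun a => ENNReal.ofReal (P b a)).comp (measurable_coord 0)
  calc ∫⁻ x, Ruelle _ _ f x ∂μ
      = ∫⁻ x, ∑' b, ENNReal.ofReal (P b (x.1 0)) * f (consIfAdj b x) ∂μ :=
        lintegral_congr fun x => ruelle_log_eq_tsum f x
    _ = ∑' b, ∫⁻ x, ENNReal.ofReal (P b (x.1 0)) * f (consIfAdj b x) ∂μ :=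
        lintegral_tsum fun b => ((hρ b).mul (hf.comp (measurable_consIfAdj b))).aemeasurable
    _ = ∑' b, ∫⁻ x in cylinder 0 (fun _ => b), f x ∂μ := tsum_congr fun b => by
        rw [← map_consIfAdj_withDensity hg hsucc hfin b, lintegral_map hf (measurable_consIfAdj b)]
        exact (lintegral_withDensity_eq_lintegral_mul _ (hρ b)
          (hf.comp (measurable_consIfAdj b))).symm
    _ = ∫⁻ x, f x ∂μ := (lintegral_eq_tsum_cylinder_zero μ f).symm

end Measure

end Harmonic

theorem harmonic_to_conformal_general [Countable S] [MeasurableSpace S]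
    [MeasurableSingletonClass S] [TopologicalSpace S] [DiscreteTopology S]
    (P : S → S → ℝ) (hPnn : ∀ a b, 0 ≤ P a b)
    (hlocF : ∀ a : S, {b : S | 0 < P a b}.Finite) :
    ∃ Φ : (S → ℝ) → Measure (MShift (fun a b => 0 < P a b)),
      (∀ h : S → ℝ, (∀ a, 0 < h a) → (∀ a, HasSum (fun b => P a b * h b) (h a)) →
        (∀ (n : ℕ) (w : Fin (n + 1) → S),
          Φ h {x : MShift (fun a b => 0 < P a b) | ∀ i : Fin (n + 1), x.1 i = w i}
            = ENNReal.ofReal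
                ((∏ i : Fin n, P (w i.castSucc) (w i.succ)) * h (w (Fin.last n)))) ∧
        (∀ K : Set (MShift (fun a b => 0 < P a b)), IsCompact K → Φ h K ≠ ⊤) ∧
        (∀ f : MShift (fun a b => 0 < P a b) → ℝ≥0∞, Measurable f →
          ∫⁻ x, Ruelle (fun a b => 0 < P a b)
              (fun x => Real.log (P (x.1 0) (x.1 1))) f x ∂(Φ h)
            = ∫⁻ x, f x ∂(Φ h))) ∧
      (∀ h₁ h₂ : S → ℝ, (∀ a, 0 < h₁ a) → (∀ a, HasSum (fun b => P a b * h₁ b) (h₁ a)) →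
        (∀ a, 0 < h₂ a) → (∀ a, HasSum (fun b => P a b * h₂ b) (h₂ a)) →
        Φ (h₁ + h₂) = Φ h₁ + Φ h₂) ∧
      (∀ (h : S → ℝ) (c : ℝ), (∀ a, 0 < h a) →
        (∀ a, HasSum (fun b => P a b * h b) (h a)) → 0 < c →
        Φ (c • h) = ENNReal.ofReal c • Φ h) ∧
      (∀ h₁ h₂ : S → ℝ, (∀ a, 0 < h₁ a) → (∀ a, HasSum (fun b => P a b * h₁ b) (h₁ a)) →
        (∀ a, 0 < h₂ a) → (∀ a, HasSum (fun b => P a b * h₂ b) (h₂ a)) →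
        Φ h₁ = Φ h₂ → h₁ = h₂) := by
  have hg {h : S → ℝ} (hpos : ∀ a, 0 < h a) (hh : ∀ a, HasSum (fun b => P a b * h b) (h a)) :=
    isHarmonic_toNNReal hPnn (fun a => (hpos a).le) hh
  have hsucc {h : S → ℝ} (hpos : ∀ a, 0 < h a) (hh : ∀ a, HasSum (fun b => P a b * h b) (h a))
      (a : S) : ∃ b, 0 < P a b :=
    (hg hpos hh).exists_pos (Real.toNNReal_pos.mpr (hpos a)).ne'
  refine ⟨fun h => harmonicMeasure P fun a => (h a).toNNReal, fun h hpos hh => ⟨fun n w => ?_,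
    fun K hK => measure_ne_top_of_isCompact (fun a => ?_) hK,
    fun f hf => lintegral_ruelle_harmonicMeasure (hg hpos hh) (hsucc hpos hh) hlocF hf⟩,
    fun h₁ h₂ hpos₁ hh₁ hpos₂ hh₂ => ?_, fun h c hpos hh hc => ?_,
    fun h₁ h₂ hpos₁ hh₁ hpos₂ hh₂ heq => funext fun a => ?_⟩
  · rw [setOf_forall_fin_eq_cylinder,
      harmonicMeasure_cylinder (hg hpos hh) (hsucc hpos hh) hlocF, cylinderWeight_toNNReal hPnn]
  · rw [harmonicMeasure_cylinder_zero (hg hpos hh) (hsucc hpos hh) hlocF]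
    exact ENNReal.coe_ne_top
  · have hadd : (fun a => ((h₁ + h₂) a).toNNReal) =
        (fun a => (h₁ a).toNNReal) + fun a => (h₂ a).toNNReal :=
      funext fun a => Real.toNNReal_add (hpos₁ a).le (hpos₂ a).le
    beta_reduce
    rw [hadd]
    exact harmonicMeasure_add (hg hpos₁ hh₁) (hg hpos₂ hh₂) (hsucc hpos₁ hh₁) hlocF
  · have hsmul : (fun a => ((c • h) a).toNNReal) = c.toNNReal • fun a => (h a).toNNReal :=
      funext fun a => Real.toNNReal_mul hc.le
    beta_reduce
    rw [hsmul]
    exact harmonicMeasure_const_smul (hg hpos hh) (hsucc hpos hh) hlocF _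
  · have := congrArg (· (cylinder 0 fun _ => a)) heq
    simp only [harmonicMeasure_cylinder_zero (hg hpos₁ hh₁) (hsucc hpos₁ hh₁) hlocF,
      harmonicMeasure_cylinder_zero (hg hpos₂ hh₂) (hsucc hpos₂ hh₂) hlocF] at this
    exact (Real.toNNReal_eq_toNNReal_iff (hpos₁ a).le (hpos₂ a).le).mp (ENNReal.coe_injective this)

/-- For a transient, irreducible, locally finite random walk `P`, every positive
`P`-harmonic function `h` gives rise to a Radon measure `μ_h` on path space, with
`μ_h([a₁,…,aₙ]) = P(a₁,a₂)⋯P(a_{n−1},aₙ) h(aₙ)`, which is `1`-conformal for the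
potential `φ(x) = log P(x₀, x₁)`; the assignment `h ↦ μ_h` is linear and injective. -/
theorem harmonic_to_conformal [Countable S] [MeasurableSpace S]
    [MeasurableSingletonClass S] [TopologicalSpace S] [DiscreteTopology S]
    (P : S → S → ℝ) (hPnn : ∀ a b, 0 ≤ P a b)
    (hstoch : ∀ a, HasSum (fun b => P a b) 1)
    (hirr : TransitiveShift (fun a b => 0 < P a b))
    (hlocF : ∀ a : S, {b : S | 0 < P a b}.Finite)
    (hlocB : ∀ b : S, {a : S | 0 < P a b}.Finite)
    (htransient : ∀ a b : S, Summable (fun n => Ppow P n a b)) :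
    ∃ Φ : (S → ℝ) → Measure (MShift (fun a b => 0 < P a b)),
      (∀ h : S → ℝ, (∀ a, 0 < h a) → (∀ a, HasSum (fun b => P a b * h b) (h a)) →
        (∀ (n : ℕ) (w : Fin (n + 1) → S),
          Φ h {x : MShift (fun a b => 0 < P a b) | ∀ i : Fin (n + 1), x.1 i = w i}
            = ENNReal.ofReal
                ((∏ i : Fin n, P (w i.castSucc) (w i.succ)) * h (w (Fin.last n)))) ∧
        (∀ K : Set (MShift (fun a b => 0 < P a b)), IsCompact K → Φ h K ≠ ⊤) ∧
        (∀ f : MShift (fun a b => 0 < P a b) → ℝ≥0∞, Measurable f →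
          ∫⁻ x, Ruelle (fun a b => 0 < P a b)
              (fun x => Real.log (P (x.1 0) (x.1 1))) f x ∂(Φ h)
            = ∫⁻ x, f x ∂(Φ h))) ∧
      (∀ h₁ h₂ : S → ℝ, (∀ a, 0 < h₁ a) → (∀ a, HasSum (fun b => P a b * h₁ b) (h₁ a)) →
        (∀ a, 0 < h₂ a) → (∀ a, HasSum (fun b => P a b * h₂ b) (h₂ a)) →
        Φ (h₁ + h₂) = Φ h₁ + Φ h₂) ∧
      (∀ (h : S → ℝ) (c : ℝ), (∀ a, 0 < h a) →
        (∀ a, HasSum (fun b => P a b * h b) (h a)) → 0 < c →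
        Φ (c • h) = ENNReal.ofReal c • Φ h) ∧
      (∀ h₁ h₂ : S → ℝ, (∀ a, 0 < h₁ a) → (∀ a, HasSum (fun b => P a b * h₁ b) (h₁ a)) →
        (∀ a, 0 < h₂ a) → (∀ a, HasSum (fun b => P a b * h₂ b) (h₂ a)) →
        Φ h₁ = Φ h₂ → h₁ = h₂) :=
  harmonic_to_conformal_general P hPnn hlocF
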